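/- Let A be an algebra with a term t Mal'cev modulo F and G, where F, G map reflexive admissible relations on A to reflexive admissible relations. Then for all reflexive admissible relations R, S on A and every binary relation θ on A: R ∘ θ ∘ S ⊆ F(R) ∘ cl((R ∘ θ) ∪ (θ ∘ S)) ∘ G(S), where cl denotes the least compatible relation containing the given set. -/

import Mathlib

structure Signature where
  symbols : Type
  arity : symbols → ℕ

structure UAAlgebra (σ : Signature) where
  carrier : Type
  ops : ∀ s, (Fin (σ.arity s) → carrier) → carrier

namespace Paper

variable {σ : Signature}

/-- Binary relations on the carrier of an algebra. -/
abbrev Rel (A : UAAlgebra σ) := A.carrier → A.carrier → Prop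

/-- A relation is admissible (compatible) if it is preserved by all operations,
i.e. it is a subalgebra of `A × A`. -/
def Compatible (A : UAAlgebra σ) (R : Rel A) : Prop :=
  ∀ s (f g : Fin (σ.arity s) → A.carrier),
    (∀ j, R (f j) (g j)) → R (A.ops s f) (A.ops s g)

/-- Reflexive and admissible. -/
def RAdm (A : UAAlgebra σ) (R : Rel A) : Prop :=
  Reflexive R ∧ Compatible A R

/-- Relational composition. -/
def comp {A : UAAlgebra σ} (R S : Rel A) : Rel A :=
  fun a c => ∃ b, R a b ∧ S b c

/-- `cl A X` : the least compatible relation containing `X`. -/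
def cl (A : UAAlgebra σ) (X : Rel A) : Rel A :=
  fun a b => ∀ S : Rel A, Compatible A S → (∀ x y, X x y → S x y) → S a b

/-- The least reflexive compatible relation containing `X`. -/
def clRefl (A : UAAlgebra σ) (X : Rel A) : Rel A :=
  fun a b => ∀ S : Rel A, Reflexive S → Compatible A S → (∀ x y, X x y → S x y) → S a b

/-- `altComp R S n` is `R ∘ₙ S`, the alternating composition
`R ∘ S ∘ R ∘ ⋯` with `n` factors (`n - 1` occurrences of `∘`);
by convention `R ∘₀ S` is the identity relation. -/
def altComp {A : UAAlgebra σ} (R S : Rel A) : ℕ → Rel A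
  | 0 => Eq
  | n + 1 => comp R (altComp S R n)

/-- `relPow R n = Rⁿ`, with `R⁰` the identity relation. -/
def relPow {A : UAAlgebra σ} (R : Rel A) : ℕ → Rel A
  | 0 => Eq
  | n + 1 => comp R (relPow R n)

/-- The join `R + S = ⋃ₙ R ∘ₙ S`. -/
def join {A : UAAlgebra σ} (R S : Rel A) : Rel A :=
  fun a b => ∃ n, altComp R S n a b

/-- Converse relation `R⁻`. -/
def conv {A : UAAlgebra σ} (R : Rel A) : Rel A :=
  fun a b => R b a

/-- Composition of a finite list of relations (empty list gives the identity). -/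
def compList {A : UAAlgebra σ} : List (Rel A) → Rel A
  | [] => Eq
  | r :: l => comp r (compList l)

/-- Join of a family of relations: the union of all finite compositions of members. -/
def joinFam {A : UAAlgebra σ} {ι : Type} (R : ι → Rel A) : Rel A :=
  fun a b => ∃ l : List ι, compList (l.map R) a b

/-- The smallest congruence containing `X`. -/
def cg (A : UAAlgebra σ) (X : Rel A) : Rel A :=
  fun a b => ∀ S : Rel A, Equivalence S → Compatible A S →
    (∀ x y, X x y → S x y) → S a b

/-- Terms of the signature `σ` in `n` variables. -/
inductive Term (σ : Signature) (n : ℕ) : Type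
  | var : Fin n → Term σ n
  | op : ∀ s, (Fin (σ.arity s) → Term σ n) → Term σ n

/-- Evaluation of a term in an algebra under an environment. -/
def Term.eval {n : ℕ} (A : UAAlgebra σ) (env : Fin n → A.carrier) : Term σ n → A.carrier
  | .var k => env k
  | .op s args => A.ops s fun j => (args j).eval A env

/-- The ternary term operation induced by a ternary term. -/
def tApp (A : UAAlgebra σ) (t : Term σ 3) (a b c : A.carrier) : A.carrier :=
  t.eval A ![a, b, c]

/-- `t` is Mal'cev modulo `F` and `G`: whenever `a R b` with `R` reflexive admissible,
`a F(R) t(a,b,b)` and `t(a,a,b) G(R) b`. -/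
def MalcevMod (A : UAAlgebra σ) (F G : Rel A → Rel A) (t : Term σ 3) : Prop :=
  ∀ R : Rel A, RAdm A R → ∀ a b : A.carrier, R a b →
    F R a (tApp A t a b b) ∧ G R (tApp A t a a b) b

end Paper


open Paper

/-! Given `a R b θ b' S c`, Mal'cev modulo `F` and `G` gives `a F(R) t(a,b,b)` and
`t(b',b',c) G(S) c`. The two middle elements are linked by applying `t` to the coordinatewise
pairs `(a,b')`, `(b,b')`, `(b,c)`, which lie in `R ∘ θ`, `θ ∘ S` (by reflexivity of `S`) and
`θ ∘ S`; compatibility of the closure then puts `(t(a,b,b), t(b',b',c))` in it. -/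

namespace Paper

variable {σ : Signature} {A : UAAlgebra σ}

theorem Compatible.term_eval {S : Rel A} (hS : Compatible A S) {n : ℕ} (t : Term σ n)
    {e₁ e₂ : Fin n → A.carrier} (h : ∀ j, S (e₁ j) (e₂ j)) :
    S (t.eval A e₁) (t.eval A e₂) := by
  induction t with
  | var k => exact h k
  | op s args ih => exact hS s _ _ ih

theorem Compatible.tApp {S : Rel A} (hS : Compatible A S) (t : Term σ 3)
    {a a' b b' c c' : A.carrier} (ha : S a a') (hb : S b b') (hc : S c c') :
    S (tApp A t a b c) (tApp A t a' b' c') :=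
  hS.term_eval t fun j => by fin_cases j <;> assumption

theorem cl_compatible (X : Rel A) : Compatible A (cl A X) :=
  fun s f g h S hS hX => hS s f g fun j => h j S hS hX

theorem le_cl {X : Rel A} {x y : A.carrier} (h : X x y) : cl A X x y :=
  fun _ _ hX => hX x y h

end Paper

theorem stmt1_general {σ : Signature} (A : UAAlgebra σ) (F G : Rel A → Rel A)
    (t : Term σ 3) (ht : MalcevMod A F G t)
    (R S : Rel A) (hR : RAdm A R) (hS : RAdm A S) (θ : Rel A) :
    ∀ a c, comp R (comp θ S) a c →
      comp (F R) (comp (cl A (fun u v => comp R θ u v ∨ comp θ S u v)) (G S)) a c := by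
  rintro a c ⟨b, hab, b', hbb', hb'c⟩
  refine ⟨tApp A t a b b, (ht R hR a b hab).1, tApp A t b' b' c, ?_, (ht S hS b' c hb'c).2⟩
  exact (cl_compatible _).tApp t (le_cl (Or.inl ⟨b, hab, hbb'⟩))
    (le_cl (Or.inr ⟨b', hbb', hS.1 b'⟩)) (le_cl (Or.inr ⟨b', hbb', hb'c⟩))

/-- Theorem 1(ii): `R ∘ θ ∘ S ⊆ F(R) ∘ cl((R ∘ θ) ∪ (θ ∘ S)) ∘ G(S)`. -/
theorem stmt1 {σ : Signature} (A : UAAlgebra σ) (F G : Rel A → Rel A)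
    (hF : ∀ R, RAdm A R → RAdm A (F R)) (hG : ∀ R, RAdm A R → RAdm A (G R))
    (t : Term σ 3) (ht : MalcevMod A F G t)
    (R S : Rel A) (hR : RAdm A R) (hS : RAdm A S) (θ : Rel A) :
    ∀ a c, comp R (comp θ S) a c →
      comp (F R) (comp (cl A (fun u v => comp R θ u v ∨ comp θ S u v)) (G S)) a c :=
  stmt1_general A F G t ht R S hR hS θ
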